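/- Let p, n, k be positive integers with k ≥ 2 and p^k ≤ n. Then there exists a constant K depending only on k such that for every σ ∈ S_p, the unitary Weingarten function satisfies |Wg(n, σ)| ≤ K n^{−p − |σ|(1 − 2/k)}. -/

import Mathlib

/-- `|σ|`: the minimal number of transpositions whose product is `σ`. -/
noncomputable def permLength {p : ℕ} (σ : Equiv.Perm (Fin p)) : ℕ :=
  sInf {k | ∃ l : List (Equiv.Perm (Fin p)),
    l.length = k ∧ (∀ τ ∈ l, τ.IsSwap) ∧ l.prod = σ}

/-- `#σ`: the number of cycles of `σ`, counting fixed points. -/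
def cycleCount {p : ℕ} (σ : Equiv.Perm (Fin p)) : ℕ :=
  σ.cycleType.card + (p - σ.support.card)

/-!
Let `ℓ(ρ) = p - #ρ`, `α = 1 - 2/k` and `x = n^(-2/k)`, and let `M` be the least constant with
`|Wg τ| ≤ M n^(-p - α|τ|)` for all `τ`. Since `#ρ = p - ℓ(ρ)` and `ρ` is a product of `ℓ(ρ)`
transpositions (so `|σ| ≤ |τ| + ℓ(σ⁻¹τ)`), the orthogonality relation at `σ`, with its diagonal
term `n^p Wg σ` isolated, gives `n^p |Wg σ| ≤ δ_{σ,1} + M n^(-α|σ|) ∑_{ρ ≠ 1} x^ℓ(ρ)`.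
The generating function `∑_ρ x^ℓ(ρ) = ∏_{j<p} (1 + j x) ≤ exp (p² x / 2) ≤ exp (1/2)`, where
`p² x ≤ 1` is `p^k ≤ n`, bounds the sum by `2/3`. Hence `M ≤ 1 + 2M/3`, that is `M ≤ 3`.
-/

open Finset

namespace Equiv.Perm

variable {α : Type*} [Fintype α] [DecidableEq α]

/-- `card α` minus the number of cycles of `σ`, counting fixed points. -/
def cayleyLength (σ : Perm α) : ℕ := #σ.support - σ.cycleType.card

theorem card_cycleType_le_card_support (σ : Perm α) : σ.cycleType.card ≤ #σ.support := by
  have h := Multiset.card_nsmul_le_sum (s := σ.cycleType) (a := 2)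
    fun _ hm => two_le_of_mem_cycleType hm
  rw [sum_cycleType, smul_eq_mul] at h
  omega

@[simp]
theorem cayleyLength_one : cayleyLength (1 : Perm α) = 0 := by
  simp [cayleyLength]

@[simp]
theorem cayleyLength_inv (σ : Perm α) : cayleyLength σ⁻¹ = cayleyLength σ := by
  simp [cayleyLength, cycleType_inv, support_inv]

theorem Disjoint.cayleyLength_mul {σ τ : Perm α} (h : Disjoint σ τ) :
    cayleyLength (σ * τ) = cayleyLength σ + cayleyLength τ := by
  have hσ := card_cycleType_le_card_support σ
  have hτ := card_cycleType_le_card_support τ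
  simp only [cayleyLength, h.cycleType_mul, h.card_support_mul, Multiset.card_add]
  omega

theorem IsCycle.cayleyLength {c : Perm α} (hc : IsCycle c) :
    c.cayleyLength = #c.support - 1 := by
  simp [Perm.cayleyLength, hc.cycleType]

theorem IsCycle.cayleyLength_swap_mul {c : Perm α} (hc : IsCycle c) {x : α} (hx : c x ≠ x) :
    Perm.cayleyLength (swap x (c x) * c) + 1 = Perm.cayleyLength c := by
  have h2 := hc.two_le_card_support
  by_cases hcc : c (c x) = x
  · rw [hc.eq_swap_of_apply_apply_eq_self hx hcc] at h2 ⊢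
    simp [swap_apply_left, card_support_swap hx.symm, Perm.cayleyLength,
      (isCycle_swap hx.symm).cycleType]
  · have hx' : x ∈ c.support := mem_support.mpr hx
    rw [(hc.swap_mul hx hcc).cayleyLength, hc.cayleyLength, support_swap_mul_eq _ _ hcc,
      sdiff_singleton_eq_erase, card_erase_of_mem hx']
    omega

theorem cayleyLength_swap_mul {f : Perm α} {x : α} (hx : f x ≠ x) :
    cayleyLength (swap x (f x) * f) + 1 = cayleyLength f := by
  set c := f.cycleOf x
  set r := f * c⁻¹ with hr
  have hd : Disjoint c r :=
    (disjoint_mul_inv_of_mem_cycleFactorsFinset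
      (cycleOf_mem_cycleFactorsFinset_iff.mpr (mem_support.mpr hx))).symm
  have hf : c * r = f := by rw [hd.commute.eq, hr, inv_mul_cancel_right]
  have hcx : c x = f x := cycleOf_apply_self f x
  have hd' : Disjoint (swap x (c x) * c) r :=
    hd.mono (fun y hy => (mem_support_swap_mul_imp_mem_support_ne hy).1) le_rfl
  have hsf : swap x (f x) * f = swap x (c x) * c * r := by rw [hcx, mul_assoc, hf]
  rw [hsf, hd'.cayleyLength_mul, ← hf, hd.cayleyLength_mul,
    ← (isCycle_cycleOf f hx).cayleyLength_swap_mul (hcx ▸ hx)]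
  ring

theorem exists_isSwap_list_prod_eq (σ : Perm α) :
    ∃ l : List (Perm α), l.length = cayleyLength σ ∧ (∀ τ ∈ l, τ.IsSwap) ∧ l.prod = σ := by
  by_cases hσ : σ = 1
  · exact ⟨[], by simp [hσ], by simp, by simp [hσ]⟩
  obtain ⟨x, hx⟩ : ∃ x, σ x ≠ x := not_forall.mp fun h => hσ (Perm.ext h)
  have hlen := cayleyLength_swap_mul hx
  obtain ⟨l, hl, hswap, hprod⟩ := exists_isSwap_list_prod_eq (swap x (σ x) * σ)
  refine ⟨swap x (σ x) :: l, by simp [hl, ← hlen], ?_, by simp [hprod, swap_mul_self_mul]⟩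
  intro τ hτ
  rcases List.mem_cons.mp hτ with rfl | hτ
  · exact ⟨x, σ x, hx.symm, rfl⟩
  · exact hswap τ hτ
termination_by cayleyLength σ
decreasing_by omega

theorem decomposeFin_symm_zero {n : ℕ} (e : Perm (Fin n)) :
    decomposeFin.symm (0, e) = e.extendDomain (finSuccAboveEquiv 0) := by
  ext i
  induction i using Fin.cases with
  | zero => simp [extendDomain_apply_not_subtype]
  | succ i =>
    have := extendDomain_apply_image e (finSuccAboveEquiv 0) i
    simp_all [finSuccAboveEquiv_apply]

theorem decomposeFin_symm_eq_swap_mul {n : ℕ} (i : Fin (n + 1)) (e : Perm (Fin n)) :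
    decomposeFin.symm (i, e) = swap 0 i * decomposeFin.symm (0, e) := by
  ext j
  induction j using Fin.cases <;> simp

theorem cayleyLength_decomposeFin_symm {n : ℕ} (i : Fin (n + 1)) (e : Perm (Fin n)) :
    cayleyLength (decomposeFin.symm (i, e)) = cayleyLength e + if i = 0 then 0 else 1 := by
  have h0 : cayleyLength (decomposeFin.symm (0, e)) = cayleyLength e := by
    simp [decomposeFin_symm_zero, cayleyLength]
  split_ifs with hi
  · rw [hi, h0, add_zero]
  · have h := cayleyLength_swap_mul (f := decomposeFin.symm (i, e)) (x := 0) (by simpa using hi)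
    rw [decomposeFin_symm_apply_zero, decomposeFin_symm_eq_swap_mul i, swap_mul_self_mul, h0] at h
    rw [decomposeFin_symm_eq_swap_mul, h]

theorem sum_pow_cayleyLength {R : Type*} [CommSemiring R] (x : R) (n : ℕ) :
    ∑ σ : Perm (Fin n), x ^ cayleyLength σ = ∏ j ∈ range n, (1 + j * x) := by
  induction n with
  | zero => simp
  | succ n ih =>
    have hcount : ∑ i : Fin (n + 1), x ^ (if i = 0 then 0 else 1) = 1 + n * x := by
      simp [Fin.sum_univ_succ, Fin.succ_ne_zero]
    rw [← decomposeFin.symm.sum_comp, Fintype.sum_prod_type, prod_range_succ, ← ih]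
    simp only [cayleyLength_decomposeFin_symm, pow_add, ← sum_mul, ← mul_sum, hcount]

end Equiv.Perm

open Equiv Equiv.Perm

section Length

variable {p : ℕ}

theorem exists_isSwap_list_length_eq_permLength (σ : Perm (Fin p)) :
    ∃ l : List (Perm (Fin p)), l.length = permLength σ ∧ (∀ τ ∈ l, τ.IsSwap) ∧ l.prod = σ :=
  Nat.sInf_mem (s := {k | ∃ l : List (Perm (Fin p)), l.length = k ∧ _}) <|
    let ⟨l, hl⟩ := σ.exists_isSwap_list_prod_eq; ⟨_, l, hl⟩

theorem permLength_le_cayleyLength (σ : Perm (Fin p)) : permLength σ ≤ σ.cayleyLength :=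
  Nat.sInf_le σ.exists_isSwap_list_prod_eq

theorem permLength_one : permLength (1 : Perm (Fin p)) = 0 :=
  Nat.eq_zero_of_le_zero ((permLength_le_cayleyLength 1).trans_eq cayleyLength_one)

theorem permLength_mul_le (σ τ : Perm (Fin p)) :
    permLength (σ * τ) ≤ permLength σ + permLength τ := by
  obtain ⟨l₁, hl₁, hs₁, hp₁⟩ := exists_isSwap_list_length_eq_permLength σ
  obtain ⟨l₂, hl₂, hs₂, hp₂⟩ := exists_isSwap_list_length_eq_permLength τ
  refine Nat.sInf_le ⟨l₁ ++ l₂, by simp [hl₁, hl₂], fun g hg => ?_, by simp [hp₁, hp₂]⟩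
  rcases List.mem_append.mp hg with hg | hg
  exacts [hs₁ g hg, hs₂ g hg]

theorem permLength_le_add_cayleyLength (σ τ : Perm (Fin p)) :
    permLength σ ≤ permLength τ + (σ⁻¹ * τ).cayleyLength :=
  calc permLength σ = permLength (τ * (σ⁻¹ * τ)⁻¹) := by simp
    _ ≤ permLength τ + (σ⁻¹ * τ)⁻¹.cayleyLength :=
      (permLength_mul_le _ _).trans (Nat.add_le_add_left (permLength_le_cayleyLength _) _)
    _ = permLength τ + (σ⁻¹ * τ).cayleyLength := by rw [cayleyLength_inv]

theorem cycleCount_add_cayleyLength (σ : Perm (Fin p)) : cycleCount σ + σ.cayleyLength = p := by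
  have h₁ := card_cycleType_le_card_support σ
  have h₂ := σ.support.card_le_univ
  rw [Fintype.card_fin] at h₂
  unfold cycleCount cayleyLength
  omega

end Length

open Real

theorem prod_one_add_mul_le_exp {x : ℝ} (hx : 0 ≤ x) (p : ℕ) :
    ∏ j ∈ range p, (1 + j * x) ≤ exp (p ^ 2 * x / 2) := by
  have hgauss : (∑ j ∈ range p, j) * 2 ≤ p ^ 2 := by
    rw [sum_range_id_mul_two, sq]
    exact Nat.mul_le_mul_left _ (Nat.sub_le _ _)
  have hgauss' : (∑ j ∈ range p, (j : ℝ)) * 2 ≤ (p : ℝ) ^ 2 := by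
    rw [← Nat.cast_sum]; exact_mod_cast hgauss
  calc ∏ j ∈ range p, (1 + j * x) ≤ exp (∑ j ∈ range p, j * x) :=
        prod_one_add_le_exp_sum _ fun _ => by positivity
    _ ≤ exp (p ^ 2 * x / 2) := by
        rw [exp_le_exp, ← sum_mul]
        nlinarith

theorem exp_one_half_le : exp (1 / 2) ≤ 5 / 3 := by
  have h : exp (1 / 2) * exp (1 / 2) = exp 1 := by rw [← exp_add]; norm_num
  nlinarith [exp_one_lt_d9, exp_pos (1 / 2)]

theorem sq_mul_rpow_neg_two_div_le_one {k p n : ℕ} (hk : 0 < k) (hpk : p ^ k ≤ n) :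
    (p : ℝ) ^ 2 * (n : ℝ) ^ (-(2 / k : ℝ)) ≤ 1 := by
  rcases p.eq_zero_or_pos with rfl | hp
  · simp
  have hn : (0 : ℝ) < n := by exact_mod_cast (Nat.one_le_pow k p hp).trans hpk
  have hroot : (p : ℝ) ≤ (n : ℝ) ^ (k : ℝ)⁻¹ :=
    (le_rpow_inv_iff_of_pos (by positivity) hn.le (by positivity)).mpr
      (by rw [rpow_natCast]; exact_mod_cast hpk)
  calc (p : ℝ) ^ 2 * (n : ℝ) ^ (-(2 / k : ℝ))
      ≤ ((n : ℝ) ^ (k : ℝ)⁻¹) ^ 2 * (n : ℝ) ^ (-(2 / k : ℝ)) := by gcongr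
    _ = 1 := by
        rw [← rpow_mul_natCast hn.le, ← rpow_add hn]
        norm_num [div_eq_inv_mul]

section Weingarten

variable {p n : ℕ} {α : ℝ}

theorem rpow_cycleCount_mul_rpow_le (hn : 1 ≤ n) (hα : 0 ≤ α) (σ τ : Perm (Fin p)) :
    (n : ℝ) ^ cycleCount (σ⁻¹ * τ) * (n : ℝ) ^ (-(p : ℝ) - permLength τ * α) ≤
      (n : ℝ) ^ (-(permLength σ : ℝ) * α) * ((n : ℝ) ^ (α - 1)) ^ (σ⁻¹ * τ).cayleyLength := by
  set ρ := σ⁻¹ * τ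
  have hn0 : (0 : ℝ) < n := by exact_mod_cast hn
  have hcount : (cycleCount ρ : ℝ) + ρ.cayleyLength = p := by
    exact_mod_cast cycleCount_add_cayleyLength ρ
  have hlen : (permLength σ : ℝ) ≤ permLength τ + ρ.cayleyLength := by
    exact_mod_cast permLength_le_add_cayleyLength σ τ
  rw [← rpow_natCast (n : ℝ), ← rpow_add hn0, ← rpow_natCast ((n : ℝ) ^ (α - 1)),
    ← rpow_mul hn0.le, ← rpow_add hn0]
  exact rpow_le_rpow_of_exponent_le (by exact_mod_cast hn)
    (by nlinarith [mul_le_mul_of_nonneg_left hlen hα])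

theorem weingarten_abs_le_of_forall_abs_le (hn : 1 ≤ n) (hα : 0 ≤ α) {c M : ℝ} (hM : 0 ≤ M)
    (hsum : ∑ ρ : Perm (Fin p), ((n : ℝ) ^ (α - 1)) ^ ρ.cayleyLength ≤ 1 + c)
    {Wg : Perm (Fin p) → ℝ}
    (hWg : ∀ σ : Perm (Fin p),
      ∑ τ : Perm (Fin p), (n : ℝ) ^ cycleCount (σ⁻¹ * τ) * Wg τ = if σ = 1 then 1 else 0)
    (hbound : ∀ τ, |Wg τ| ≤ M * (n : ℝ) ^ (-(p : ℝ) - permLength τ * α)) (σ : Perm (Fin p)) :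
    |Wg σ| ≤ (1 + c * M) * (n : ℝ) ^ (-(p : ℝ) - permLength σ * α) := by
  set x := (n : ℝ) ^ (α - 1)
  set Y := (n : ℝ) ^ (-(permLength σ : ℝ) * α)
  have hn0 : (0 : ℝ) < n := by exact_mod_cast hn
  have hoff : ∑ τ ∈ univ.erase σ, |(n : ℝ) ^ cycleCount (σ⁻¹ * τ) * Wg τ| ≤ c * M * Y := by
    have hx : ∑ τ ∈ univ.erase σ, x ^ (σ⁻¹ * τ).cayleyLength ≤ c := by
      have hshift : ∑ τ, x ^ (σ⁻¹ * τ).cayleyLength = ∑ ρ : Perm (Fin p), x ^ ρ.cayleyLength :=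
        Equiv.sum_comp (Equiv.mulLeft σ⁻¹) fun ρ : Perm (Fin p) => x ^ ρ.cayleyLength
      rw [sum_erase_eq_sub (mem_univ σ), hshift, inv_mul_cancel, cayleyLength_one, pow_zero]
      linarith
    calc ∑ τ ∈ univ.erase σ, |(n : ℝ) ^ cycleCount (σ⁻¹ * τ) * Wg τ|
        ≤ ∑ τ ∈ univ.erase σ, M * (Y * x ^ (σ⁻¹ * τ).cayleyLength) := by
          refine sum_le_sum fun τ _ => ?_
          calc |(n : ℝ) ^ cycleCount (σ⁻¹ * τ) * Wg τ|
              = (n : ℝ) ^ cycleCount (σ⁻¹ * τ) * |Wg τ| := by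
                rw [abs_mul, abs_of_pos (by positivity)]
            _ ≤ (n : ℝ) ^ cycleCount (σ⁻¹ * τ) * (M * (n : ℝ) ^ (-(p : ℝ) - permLength τ * α)) := by
                gcongr
                exact hbound τ
            _ = M * ((n : ℝ) ^ cycleCount (σ⁻¹ * τ) * (n : ℝ) ^ (-(p : ℝ) - permLength τ * α)) := by
                ring
            _ ≤ M * (Y * x ^ (σ⁻¹ * τ).cayleyLength) :=
                mul_le_mul_of_nonneg_left (rpow_cycleCount_mul_rpow_le hn hα σ τ) hM
      _ = M * Y * ∑ τ ∈ univ.erase σ, x ^ (σ⁻¹ * τ).cayleyLength := by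
          rw [mul_sum]; simp only [mul_assoc]
      _ ≤ c * M * Y := by nlinarith [show 0 ≤ M * Y by positivity]
  have hdiag : (n : ℝ) ^ p * |Wg σ| ≤ (1 + c * M) * Y := by
    have heq := hWg σ
    rw [← add_sum_erase _ _ (mem_univ σ), inv_mul_cancel, ← eq_sub_iff_add_eq] at heq
    have hcount : cycleCount (1 : Perm (Fin p)) = p := by
      simpa using cycleCount_add_cayleyLength (1 : Perm (Fin p))
    have hδ : (if σ = 1 then (1 : ℝ) else 0) ≤ Y := by
      split_ifs with h
      · simp [Y, h, permLength_one]
      · positivity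
    calc (n : ℝ) ^ p * |Wg σ| = |(if σ = 1 then 1 else 0) -
          ∑ τ ∈ univ.erase σ, (n : ℝ) ^ cycleCount (σ⁻¹ * τ) * Wg τ| := by
          rw [← heq, hcount, abs_mul, abs_of_pos (pow_pos hn0 p)]
      _ ≤ (if σ = 1 then 1 else 0) + c * M * Y := by
          refine (abs_sub _ _).trans (add_le_add (by split_ifs <;> simp) ?_)
          exact (abs_sum_le_sum_abs _ _).trans hoff
      _ ≤ (1 + c * M) * Y := by linarith
  rw [sub_eq_add_neg, rpow_add hn0, ← neg_mul, rpow_neg hn0.le, rpow_natCast]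
  rw [← le_div_iff₀' (by positivity)] at hdiag
  calc |Wg σ| ≤ (1 + c * M) * Y / (n : ℝ) ^ p := hdiag
    _ = _ := by ring

theorem weingarten_abs_le_of_sum_pow_cayleyLength_le (hn : 1 ≤ n) (hα : 0 ≤ α) {c : ℝ} (hc : c < 1)
    (hsum : ∑ ρ : Perm (Fin p), ((n : ℝ) ^ (α - 1)) ^ ρ.cayleyLength ≤ 1 + c)
    {Wg : Perm (Fin p) → ℝ}
    (hWg : ∀ σ : Perm (Fin p),
      ∑ τ : Perm (Fin p), (n : ℝ) ^ cycleCount (σ⁻¹ * τ) * Wg τ = if σ = 1 then 1 else 0)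
    (σ : Perm (Fin p)) :
    |Wg σ| ≤ (1 - c)⁻¹ * (n : ℝ) ^ (-(p : ℝ) - permLength σ * α) := by
  have hn0 : (0 : ℝ) < n := by exact_mod_cast hn
  set E : Perm (Fin p) → ℝ := fun τ => (n : ℝ) ^ (-(p : ℝ) - permLength τ * α)
  have hE (τ : Perm (Fin p)) : 0 < E τ := rpow_pos_of_pos hn0 _
  set M := univ.sup' univ_nonempty fun τ => |Wg τ| / E τ
  have hbound (τ : Perm (Fin p)) : |Wg τ| ≤ M * E τ :=
    (div_le_iff₀ (hE τ)).mp (le_sup' (fun τ => |Wg τ| / E τ) (mem_univ τ))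
  have hM0 : 0 ≤ M :=
    (div_nonneg (abs_nonneg _) (hE 1).le).trans (le_sup' (fun τ => |Wg τ| / E τ) (mem_univ 1))
  have hM : M ≤ 1 + c * M := sup'_le _ _ fun τ _ =>
    (div_le_iff₀ (hE τ)).mpr (weingarten_abs_le_of_forall_abs_le hn hα hM0 hsum hWg hbound τ)
  have hM' : M ≤ (1 - c)⁻¹ := by
    rw [← one_div, le_div_iff₀ (sub_pos.mpr hc)]
    linarith
  exact (hbound σ).trans (mul_le_mul_of_nonneg_right hM' (hE σ).le)

end Weingarten

/-- For `n ≥ p`, `Wg(n, ·)` is the inverse of `σ ↦ n^{#σ}` in the group algebra of `S_p`. -/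
theorem weingarten_bound (k : ℕ) (hk : 2 ≤ k) :
    ∃ K : ℝ, 0 < K ∧ ∀ (p n : ℕ), 0 < p → p ^ k ≤ n →
      ∀ Wg : Equiv.Perm (Fin p) → ℝ,
        (∀ σ : Equiv.Perm (Fin p),
          ∑ τ : Equiv.Perm (Fin p), (n : ℝ) ^ cycleCount (σ⁻¹ * τ) * Wg τ =
            if σ = 1 then 1 else 0) →
        ∀ σ : Equiv.Perm (Fin p),
          |Wg σ| ≤ K * (n : ℝ) ^ (-(p : ℝ) - (permLength σ : ℝ) * (1 - 2 / (k : ℝ))) := by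
  refine ⟨3, by norm_num, fun p n hp hpk Wg hWg σ => ?_⟩
  have hn : 1 ≤ n := (Nat.one_le_pow k p hp).trans hpk
  have hα : 0 ≤ 1 - 2 / (k : ℝ) := by
    rw [sub_nonneg, div_le_one (by positivity)]
    exact_mod_cast hk
  have hsum : ∑ ρ : Perm (Fin p), ((n : ℝ) ^ ((1 - 2 / (k : ℝ)) - 1)) ^ ρ.cayleyLength ≤
      1 + 2 / 3 := by
    rw [sum_pow_cayleyLength, sub_sub_cancel_left]
    calc ∏ j ∈ range p, (1 + j * (n : ℝ) ^ (-(2 / k : ℝ)))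
        ≤ exp (p ^ 2 * (n : ℝ) ^ (-(2 / k : ℝ)) / 2) := prod_one_add_mul_le_exp (by positivity) p
      _ ≤ exp (1 / 2) := by
          gcongr
          linarith [sq_mul_rpow_neg_two_div_le_one (by omega) hpk]
      _ ≤ 1 + 2 / 3 := by linarith [exp_one_half_le]
  convert weingarten_abs_le_of_sum_pow_cayleyLength_le hn hα (by norm_num) hsum hWg σ using 2
  norm_num
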